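/- Every ZMod 2-valued 2-cocycle on the n-dimensional cube is a coboundary: let c be a 2-cochain on C(n), i.e., a function assigning to each square (v, i, j) (with i ≠ j, v i = 0, v j = 0) an element c(v, i, j) ∈ ZMod 2 satisfying c(v, i, j) = c(v, j, i). Suppose that for every vertex v and pairwise distinct indices i, j, k with v i = v j = v k = 0, one has c(v, i, j) + c(v + e_k, i, j) + c(v, i, k) + c(v + e_j, i, k) + c(v, j, k) + c(v + e_i, j, k) = 0 in ZMod 2. Then there exists a 1-cochain s on C(n) such that c(v, i, j) = s(v, i) + s(v + e_j, i) + s(v, j) + s(v + e_i, j) for every square (v, i, j). (This is the combinatorial content of the vanishing H²(C(n); F₂) = 0 used in the paper to produce sign assignments.) -/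

import Mathlib

/-!
The cube contracts onto the origin by clearing coordinates from the top: `truncate v m` keeps
the coordinates of `v` with index `< m`. Pushing an edge `(v, i)` down this way sweeps out the
squares `(truncate v k, i, k)` with `i < k` and `v k = 1`; the 1-cochain `s` sums `c` over them.
For `i < j`, the cocycle condition on the 3-cube `(truncate v k; i, j, k)` shows that the `k`-th
contribution to `δs (v, i, j)` is the difference of `c (·, i, j)` at the truncations to `k + 1`
and to `k` coordinates, so the contributions telescope to `c (v, i, j)`.
-/

open Finset

namespace Cube

variable {n : ℕ}

section Truncate

variable {M : Type*}

def truncate [Zero M] (v : Fin n → M) (m : ℕ) : Fin n → M :=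
  fun k => if (k : ℕ) < m then v k else 0

lemma truncate_apply_of_lt [Zero M] (v : Fin n → M) {m : ℕ} {x : Fin n} (h : (x : ℕ) < m) :
    truncate v m x = v x := if_pos h

lemma truncate_apply_of_le [Zero M] (v : Fin n → M) {m : ℕ} {x : Fin n} (h : m ≤ x) :
    truncate v m x = 0 := if_neg (Nat.not_lt.mpr h)

lemma truncate_of_le [Zero M] (v : Fin n → M) {m : ℕ} (h : n ≤ m) : truncate v m = v :=
  funext fun x => truncate_apply_of_lt v (by omega)

lemma truncate_single [Zero M] (j : Fin n) (a : M) (m : ℕ) :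
    truncate (Pi.single j a) m = if (j : ℕ) < m then Pi.single j a else 0 := by
  funext x
  by_cases hxj : x = j
  · subst hxj; split_ifs <;> simp_all [truncate]
  · split_ifs <;> simp [truncate, Pi.single_eq_of_ne hxj]

lemma truncate_add [AddZeroClass M] (v w : Fin n → M) (m : ℕ) :
    truncate (v + w) m = truncate v m + truncate w m := by
  funext x; by_cases h : (x : ℕ) < m <;> simp [truncate, h]

lemma truncate_succ [AddZeroClass M] (v : Fin n → M) (k : Fin n) :
    truncate v (k + 1) = truncate v k + Pi.single k (v k) := by
  funext x
  rcases lt_trichotomy (x : ℕ) k with h | h | h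
  · have : x ≠ k := Fin.ne_of_lt h
    simp [truncate, h, Nat.lt_succ_of_lt h, Pi.single_eq_of_ne this]
  · obtain rfl := Fin.ext h; simp [truncate]
  · have : x ≠ k := (Fin.ne_of_lt h).symm
    simp [truncate, Pi.single_eq_of_ne this, Nat.not_lt.mpr h.le, Nat.not_lt.mpr h]

end Truncate

section Cone

variable (c : (Fin n → ZMod 2) → Fin n → Fin n → ZMod 2)

def IsCocycle : Prop :=
  ∀ (v : Fin n → ZMod 2) (i j k : Fin n),
    i ≠ j → i ≠ k → j ≠ k → v i = 0 → v j = 0 → v k = 0 →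
    c v i j + c (v + Pi.single k 1) i j + c v i k + c (v + Pi.single j 1) i k +
      c v j k + c (v + Pi.single i 1) j k = 0

def coboundary (s : (Fin n → ZMod 2) → Fin n → ZMod 2) (v : Fin n → ZMod 2) (i j : Fin n) :
    ZMod 2 :=
  s v i + s (v + Pi.single j 1) i + s v j + s (v + Pi.single i 1) j

lemma coboundary_comm (s : (Fin n → ZMod 2) → Fin n → ZMod 2) (v : Fin n → ZMod 2)
    (i j : Fin n) : coboundary s v i j = coboundary s v j i := by
  unfold coboundary; ring

def coneTerm (k : Fin n) (v : Fin n → ZMod 2) (i : Fin n) : ZMod 2 :=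
  if i < k ∧ v k = 1 then c (truncate v k) i k else 0

def coneCochain (v : Fin n → ZMod 2) (i : Fin n) : ZMod 2 :=
  ∑ k, coneTerm c k v i

lemma coboundary_coneCochain (v : Fin n → ZMod 2) (i j : Fin n) :
    coboundary (coneCochain c) v i j = ∑ k, coboundary (coneTerm c k) v i j := by
  simp only [coboundary, coneCochain, sum_add_distrib]

-- Vanishing up to `m = j` lets the `k = j` contribution fit the telescoping pattern too.
def truncatedValue (v : Fin n → ZMod 2) (i j : Fin n) (m : ℕ) : ZMod 2 :=
  if (j : ℕ) < m then c (truncate v m) i j else 0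

variable {c} {v : Fin n → ZMod 2} {i j : Fin n}

lemma coboundary_coneTerm_of_lt {k : Fin n} (hkj : k < j) :
    coboundary (coneTerm c k) v i j = 0 := by
  have hjk : ¬ j < k := not_lt.mpr hkj.le
  have hj : ¬ (j : ℕ) < k := hjk
  simp [coboundary, coneTerm, hjk, Pi.single_eq_of_ne hkj.ne, truncate_add, truncate_single, hj,
    CharTwo.add_self_eq_zero]

lemma coboundary_coneTerm_self (hij : i < j) (hvj : v j = 0) :
    coboundary (coneTerm c j) v i j = c (truncate v j) i j := by
  simp [coboundary, coneTerm, hij, hvj, truncate_add, truncate_single]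

lemma coboundary_coneTerm_of_gt (hc : IsCocycle c) (hij : i < j) (hvi : v i = 0) (hvj : v j = 0)
    {k : Fin n} (hjk : j < k) :
    coboundary (coneTerm c k) v i j = c (truncate v (k + 1)) i j + c (truncate v k) i j := by
  have hik : i < k := hij.trans hjk
  have hj : (j : ℕ) < k := hjk
  have hi : (i : ℕ) < k := hik
  simp only [coboundary, coneTerm, truncate_succ, truncate_add, truncate_single, hj, hi, hik, hjk,
    if_true, true_and, Pi.add_apply, Pi.single_eq_of_ne hjk.ne', Pi.single_eq_of_ne hik.ne',
    add_zero]
  obtain hvk | hvk : v k = 0 ∨ v k = 1 := by generalize v k = x; decide +revert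
  · simp [hvk, CharTwo.add_self_eq_zero]
  · have hcube := hc (truncate v k) i j k hij.ne hik.ne hjk.ne
      ((truncate_apply_of_lt v hi).trans hvi) ((truncate_apply_of_lt v hj).trans hvj)
      (truncate_apply_of_le v le_rfl)
    simp only [hvk, if_true]
    exact CharTwo.add_eq_zero.mp (by linear_combination hcube)

lemma coboundary_coneTerm (hc : IsCocycle c) (hij : i < j) (hvi : v i = 0) (hvj : v j = 0)
    (k : Fin n) :
    coboundary (coneTerm c k) v i j =
      truncatedValue c v i j (k + 1) - truncatedValue c v i j k := by
  unfold truncatedValue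
  rcases lt_trichotomy k j with hkj | rfl | hjk
  · have hkj' : (k : ℕ) < j := hkj
    rw [coboundary_coneTerm_of_lt hkj, if_neg (by omega), if_neg (by omega), sub_zero]
  · rw [coboundary_coneTerm_self hij hvj, if_pos k.val.lt_succ_self, if_neg (lt_irrefl _),
      sub_zero, truncate_succ, hvj, Pi.single_zero, add_zero]
  · have hjk' : (j : ℕ) < k := hjk
    rw [coboundary_coneTerm_of_gt hc hij hvi hvj hjk, if_pos (by omega), if_pos hjk',
      sub_eq_add_neg, ZMod.neg_eq_self_mod_two]

lemma coboundary_coneCochain_of_lt (hc : IsCocycle c) (hij : i < j) (hvi : v i = 0)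
    (hvj : v j = 0) : coboundary (coneCochain c) v i j = c v i j := by
  rw [coboundary_coneCochain, sum_congr rfl fun k _ => coboundary_coneTerm hc hij hvi hvj k,
    Fin.sum_univ_eq_sum_range (fun m => truncatedValue c v i j (m + 1) - truncatedValue c v i j m),
    sum_range_sub]
  simp [truncatedValue, j.is_lt, truncate_of_le]

end Cone

end Cube

/-- Every `ZMod 2`-valued 2-cocycle on the `n`-dimensional cube is a coboundary:
if `c` is a symmetric 2-cochain on squares whose sum over the six boundary squares
of every 3-dimensional cube vanishes, then `c` is the coboundary of a 1-cochain `s`. -/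
theorem cube_two_cocycle_is_coboundary (n : ℕ)
    (c : (Fin n → ZMod 2) → Fin n → Fin n → ZMod 2)
    (hsymm : ∀ (v : Fin n → ZMod 2) (i j : Fin n), i ≠ j → v i = 0 → v j = 0 →
      c v i j = c v j i)
    (hc : ∀ (v : Fin n → ZMod 2) (i j k : Fin n),
      i ≠ j → i ≠ k → j ≠ k → v i = 0 → v j = 0 → v k = 0 →
      c v i j + c (v + Pi.single k 1) i j + c v i k + c (v + Pi.single j 1) i k +
        c v j k + c (v + Pi.single i 1) j k = 0) :
    ∃ s : (Fin n → ZMod 2) → Fin n → ZMod 2,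
      ∀ (v : Fin n → ZMod 2) (i j : Fin n), i ≠ j → v i = 0 → v j = 0 →
        c v i j = s v i + s (v + Pi.single j 1) i + s v j + s (v + Pi.single i 1) j := by
  refine ⟨Cube.coneCochain c, fun v i j hij hvi hvj => ?_⟩
  change c v i j = Cube.coboundary (Cube.coneCochain c) v i j
  rcases hij.lt_or_gt with h | h
  · exact (Cube.coboundary_coneCochain_of_lt hc h hvi hvj).symm
  · rw [hsymm v i j hij hvi hvj, Cube.coboundary_comm,
      Cube.coboundary_coneCochain_of_lt hc h hvj hvi]
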